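/- arXiv:1407.2657 — 2 statements merged into one kernel-verified Lean document; each statement's English description precedes it below -/
import Mathlib

section
/- Let D be a probability distribution on X with density μ, V a set of classifiers X → {-1,1}, and η ∈ [0,1]. Define a confidence-rated predictor as measurable functions ξ, ζ, γ : X → [0,1] with ξ + ζ + γ ≡ 1, satisfying for all h ∈ V: E_D[ξ(x)·1{h(x)=-1} + ζ(x)·1{h(x)=+1}] ≤ η. If h₁, h₂ ∈ V satisfy ρ_D(h₁,h₂) ≥ r for some r with 2η ≤ r ≤ 1, then any such predictor satisfies E_D[γ(x)] ≥ r − 2η. Consequently the minimum abstention probability Φ_D(V, η) ≥ r − 2η. -/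
/-!
On the disagreement set of `h₁` and `h₂` one of them says `-1` and the other `+1`, so the two
pointwise error weights add up to `ξ + ζ = 1 - γ`; elsewhere they are nonnegative. Hence the
indicator of the disagreement set is pointwise at most `err h₁ + err h₂ + γ`, and integrating gives
`r ≤ ρ_D(h₁, h₂) ≤ 2η + E_D[γ]`.
-/

open MeasureTheory

namespace ConfidenceRated

variable {X : Type*}

/-- Chance that the predictor (`ξ` on `+1`, `ζ` on `-1`, `γ` abstains) commits to the wrong label. -/
def pointwiseError (ξ ζ : X → ℝ) (h : X → ℤ) (x : X) : ℝ :=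
  ξ x * (if h x = -1 then 1 else 0) + ζ x * (if h x = 1 then 1 else 0)

variable {ξ ζ : X → ℝ}

lemma pointwiseError_nonneg (hξ : ∀ x, 0 ≤ ξ x) (hζ : ∀ x, 0 ≤ ζ x) (h : X → ℤ) (x : X) :
    0 ≤ pointwiseError ξ ζ h x := by
  have := hξ x
  have := hζ x
  unfold pointwiseError
  positivity

lemma pointwiseError_le (hξ : ∀ x, 0 ≤ ξ x) (hζ : ∀ x, 0 ≤ ζ x) (h : X → ℤ) (x : X) :
    pointwiseError ξ ζ h x ≤ ξ x + ζ x := by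
  unfold pointwiseError
  split_ifs <;> linarith [hξ x, hζ x]

lemma pointwiseError_add_of_ne {h₁ h₂ : X → ℤ} {x : X} (h₁x : h₁ x = -1 ∨ h₁ x = 1)
    (h₂x : h₂ x = -1 ∨ h₂ x = 1) (hne : h₁ x ≠ h₂ x) :
    pointwiseError ξ ζ h₁ x + pointwiseError ξ ζ h₂ x = ξ x + ζ x := by
  rcases h₁x with e₁ | e₁ <;> rcases h₂x with e₂ | e₂ <;>
    simp_all [pointwiseError, add_comm]

variable {γ : X → ℝ} {h₁ h₂ : X → ℤ}

lemma indicator_disagreement_le (hξ0 : ∀ x, 0 ≤ ξ x) (hζ0 : ∀ x, 0 ≤ ζ x) (hγ0 : ∀ x, 0 ≤ γ x)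
    (hsum : ∀ x, ξ x + ζ x + γ x = 1) (hh₁ : ∀ x, h₁ x = -1 ∨ h₁ x = 1)
    (hh₂ : ∀ x, h₂ x = -1 ∨ h₂ x = 1) (x : X) :
    {x | h₁ x ≠ h₂ x}.indicator 1 x ≤
      pointwiseError ξ ζ h₁ x + pointwiseError ξ ζ h₂ x + γ x := by
  by_cases hx : h₁ x ≠ h₂ x
  · rw [Set.indicator_of_mem hx, pointwiseError_add_of_ne (hh₁ x) (hh₂ x) hx, hsum x]
    rfl
  · rw [Set.indicator_of_notMem hx]
    linarith [pointwiseError_nonneg hξ0 hζ0 h₁ x, pointwiseError_nonneg hξ0 hζ0 h₂ x, hγ0 x]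

variable [MeasurableSpace X]

lemma integrable_pointwiseError {D : Measure X} (hξ : Integrable ξ D) (hζ : Integrable ζ D)
    (hξ0 : ∀ x, 0 ≤ ξ x) (hζ0 : ∀ x, 0 ≤ ζ x) {h : X → ℤ} (hh : Measurable h) :
    Integrable (pointwiseError ξ ζ h) D := by
  refine (hξ.add hζ).mono' ?_ (Filter.Eventually.of_forall fun x => ?_)
  · have hind : ∀ c : ℤ, Measurable fun x => if h x = c then (1 : ℝ) else 0 := fun c =>
      Measurable.ite (hh (measurableSet_singleton c)) measurable_const measurable_const
    exact (hξ.aestronglyMeasurable.mul (hind (-1)).aestronglyMeasurable).add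
      (hζ.aestronglyMeasurable.mul (hind 1).aestronglyMeasurable)
  · rw [Real.norm_of_nonneg (pointwiseError_nonneg hξ0 hζ0 h x)]
    exact pointwiseError_le hξ0 hζ0 h x

lemma measureReal_disagreement_le {D : Measure X} [IsFiniteMeasure D] (hξ : Integrable ξ D)
    (hζ : Integrable ζ D) (hγ : Integrable γ D) (hξ0 : ∀ x, 0 ≤ ξ x) (hζ0 : ∀ x, 0 ≤ ζ x)
    (hγ0 : ∀ x, 0 ≤ γ x) (hsum : ∀ x, ξ x + ζ x + γ x = 1) (hh₁ : ∀ x, h₁ x = -1 ∨ h₁ x = 1)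
    (hh₂ : ∀ x, h₂ x = -1 ∨ h₂ x = 1) (hm₁ : Measurable h₁) (hm₂ : Measurable h₂) :
    D.real {x | h₁ x ≠ h₂ x} ≤
      ∫ x, pointwiseError ξ ζ h₁ x ∂D + ∫ x, pointwiseError ξ ζ h₂ x ∂D + ∫ x, γ x ∂D := by
  have he₁ := integrable_pointwiseError hξ hζ hξ0 hζ0 hm₁
  have he₂ := integrable_pointwiseError hξ hζ hξ0 hζ0 hm₂
  have hA : MeasurableSet {x | h₁ x ≠ h₂ x} := (measurableSet_eq_fun hm₁ hm₂).compl
  calc D.real {x | h₁ x ≠ h₂ x} = ∫ x, {x | h₁ x ≠ h₂ x}.indicator 1 x ∂D :=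
        (integral_indicator_one hA).symm
    _ ≤ ∫ x, pointwiseError ξ ζ h₁ x + pointwiseError ξ ζ h₂ x + γ x ∂D :=
        integral_mono ((integrable_const 1).indicator hA) ((he₁.add he₂).add hγ)
          (indicator_disagreement_le hξ0 hζ0 hγ0 hsum hh₁ hh₂)
    _ = _ := by rw [integral_add (f := fun x => _ + _) (he₁.add he₂) hγ, integral_add he₁ he₂]

lemma integrable_of_nonneg_of_le_one {D : Measure X} [IsFiniteMeasure D] {f : X → ℝ}
    (hf : Measurable f) (hf0 : ∀ x, 0 ≤ f x) (hf1 : ∀ x, f x ≤ 1) : Integrable f D :=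
  .of_bound hf.aestronglyMeasurable 1 <| .of_forall fun x => by
    rw [Real.norm_of_nonneg (hf0 x)]
    exact hf1 x

end ConfidenceRated

open ConfidenceRated in
theorem stmt_8_general {X : Type*} [MeasurableSpace X]
    (D : Measure X) [IsProbabilityMeasure D]
    (V : Set (X → ℤ))
    (hV : ∀ h ∈ V, (∀ x, h x = -1 ∨ h x = 1) ∧ Measurable h)
    (η r : ℝ)
    (ξ ζ γ : X → ℝ)
    (hmξ : Measurable ξ) (hmζ : Measurable ζ) (hmγ : Measurable γ)
    (hξ0 : ∀ x, 0 ≤ ξ x) (hζ0 : ∀ x, 0 ≤ ζ x) (hγ0 : ∀ x, 0 ≤ γ x)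
    (hsum : ∀ x, ξ x + ζ x + γ x = 1)
    (herr : ∀ h ∈ V,
      (∫ x, ξ x * (if h x = -1 then (1 : ℝ) else 0) +
            ζ x * (if h x = 1 then (1 : ℝ) else 0) ∂D) ≤ η)
    (h₁ h₂ : X → ℤ) (h₁V : h₁ ∈ V) (h₂V : h₂ ∈ V)
    (hdis : r ≤ (D {x | h₁ x ≠ h₂ x}).toReal) :
    r - 2 * η ≤ ∫ x, γ x ∂D := by
  obtain ⟨hh₁, hm₁⟩ := hV h₁ h₁V
  obtain ⟨hh₂, hm₂⟩ := hV h₂ h₂V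
  have hξ1 x : ξ x ≤ 1 := by linarith [hsum x, hζ0 x, hγ0 x]
  have hζ1 x : ζ x ≤ 1 := by linarith [hsum x, hξ0 x, hγ0 x]
  have hγ1 x : γ x ≤ 1 := by linarith [hsum x, hξ0 x, hζ0 x]
  have hdisagree := measureReal_disagreement_le (D := D)
    (integrable_of_nonneg_of_le_one hmξ hξ0 hξ1) (integrable_of_nonneg_of_le_one hmζ hζ0 hζ1)
    (integrable_of_nonneg_of_le_one hmγ hγ0 hγ1) hξ0 hζ0 hγ0 hsum hh₁ hh₂ hm₁ hm₂
  have herr₁ : ∫ x, pointwiseError ξ ζ h₁ x ∂D ≤ η := herr h₁ h₁V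
  have herr₂ : ∫ x, pointwiseError ξ ζ h₂ x ∂D ≤ η := herr h₂ h₂V
  rw [measureReal_def] at hdisagree
  linarith

theorem stmt_8 {X : Type*} [MeasurableSpace X]
    (D : Measure X) [IsProbabilityMeasure D]
    (V : Set (X → ℤ))
    (hV : ∀ h ∈ V, (∀ x, h x = -1 ∨ h x = 1) ∧ Measurable h)
    (η r : ℝ) (hη : 0 < η) (hr2 : 2 * η ≤ r) (hr1 : r ≤ 1)
    (ξ ζ γ : X → ℝ)
    (hmξ : Measurable ξ) (hmζ : Measurable ζ) (hmγ : Measurable γ)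
    (hξ0 : ∀ x, 0 ≤ ξ x) (hζ0 : ∀ x, 0 ≤ ζ x) (hγ0 : ∀ x, 0 ≤ γ x)
    (hsum : ∀ x, ξ x + ζ x + γ x = 1)
    (herr : ∀ h ∈ V,
      (∫ x, ξ x * (if h x = -1 then (1 : ℝ) else 0) +
            ζ x * (if h x = 1 then (1 : ℝ) else 0) ∂D) ≤ η)
    (h₁ h₂ : X → ℤ) (h₁V : h₁ ∈ V) (h₂V : h₂ ∈ V)
    (hdis : r ≤ (D {x | h₁ x ≠ h₂ x}).toReal) :
    r - 2 * η ≤ ∫ x, γ x ∂D :=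
  stmt_8_general D V hV η r ξ ζ γ hmξ hmζ hmγ hξ0 hζ0 hγ0 hsum herr h₁ h₂ h₁V h₂V hdis
end

section
/- Let D be a probability distribution on X, V a set of classifiers, and 0 < λ < η < 1. Suppose ξ, ζ, γ : X → [0,1] satisfy ξ + ζ + γ ≡ 1 and for all h ∈ V, E_D[ξ·1{h=-1} + ζ·1{h=+1}] ≤ η - λ, and that there exist h₁, h₂ ∈ V with ρ_D(h₁,h₂) ≥ 2η − λ (so that E_D[γ] ≥ λ). Define ξ' = ξ, γ' = (1 − λ/E_D[γ])·γ, ζ' = 1 − ξ' − γ'. Then (ξ', ζ', γ') is a valid confidence-rated predictor with error guarantee η, i.e., for all h ∈ V, E_D[ξ'·1{h=-1} + ζ'·1{h=+1}] ≤ η, and E_D[γ'] = E_D[γ] − λ. Consequently Φ_D(V,η) ≤ Φ_D(V,η−λ) − λ. -/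
/-!
Where `h₁` and `h₂` disagree, one of them is `-1` and the other `+1`, so their pointwise errors
add up to `ξ + ζ = 1 - γ`. Integrating, `ρ_D(h₁, h₂) ≤ err(h₁) + err(h₂) + E_D[γ]`, which together
with `ρ_D(h₁, h₂) ≥ 2η - λ` and `err ≤ η - λ` forces `E_D[γ] ≥ λ > 0`. Shrinking `γ` by the factor
`1 - λ / E_D[γ]` moves the mass `(λ / E_D[γ]) γ` onto `ζ`, which raises the error of any `h` by
at most `(λ / E_D[γ]) E_D[γ] = λ`.
-/

open MeasureTheory

section CprError

variable {X : Type*}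

/-- Pointwise error of the confidence-rated predictor `(ξ, ζ, ·)` against the classifier `h`. -/
def cprError (ξ ζ : X → ℝ) (h : X → ℤ) (x : X) : ℝ :=
  ξ x * (if h x = -1 then 1 else 0) + ζ x * (if h x = 1 then 1 else 0)

variable {ξ ζ : X → ℝ} {h : X → ℤ} {x : X}

lemma cprError_nonneg (hξ : 0 ≤ ξ x) (hζ : 0 ≤ ζ x) : 0 ≤ cprError ξ ζ h x := by
  unfold cprError; split_ifs <;> linarith

lemma cprError_le_add (hξ : 0 ≤ ξ x) (hζ : 0 ≤ ζ x) : cprError ξ ζ h x ≤ ξ x + ζ x := by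
  unfold cprError; split_ifs <;> linarith

lemma cprError_add_of_ne {h₁ h₂ : X → ℤ} (hh₁ : h₁ x = -1 ∨ h₁ x = 1)
    (hh₂ : h₂ x = -1 ∨ h₂ x = 1) (hne : h₁ x ≠ h₂ x) :
    cprError ξ ζ h₁ x + cprError ξ ζ h₂ x = ξ x + ζ x := by
  unfold cprError
  rcases hh₁ with e₁ | e₁ <;> rcases hh₂ with e₂ | e₂ <;> simp_all [add_comm]

lemma cprError_add_mul_le {γ : X → ℝ} {c : ℝ} (hc : 0 ≤ c) (hγ : 0 ≤ γ x) :
    cprError ξ (fun y => ζ y + c * γ y) h x ≤ cprError ξ ζ h x + c * γ x := by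
  unfold cprError; split_ifs <;> nlinarith

variable [MeasurableSpace X]

lemma Measurable.cprError (hξ : Measurable ξ) (hζ : Measurable ζ) (hh : Measurable h) :
    Measurable (cprError ξ ζ h) :=
  (hξ.mul (Measurable.ite (hh (measurableSet_singleton _)) measurable_const measurable_const)).add
    (hζ.mul (Measurable.ite (hh (measurableSet_singleton _)) measurable_const measurable_const))

end CprError

section Integrals

variable {X : Type*} [MeasurableSpace X] {D : Measure X}

lemma integrable_of_nonneg_of_le [IsFiniteMeasure D] {f : X → ℝ} {C : ℝ} (hf : Measurable f)
    (h0 : ∀ x, 0 ≤ f x) (hC : ∀ x, f x ≤ C) : Integrable f D :=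
  .of_bound hf.aestronglyMeasurable C <| .of_forall fun x => by
    rw [Real.norm_of_nonneg (h0 x)]; exact hC x

variable [IsFiniteMeasure D] {ξ ζ γ : X → ℝ}

lemma integrable_cprError {h : X → ℤ} {C : ℝ} (hmξ : Measurable ξ) (hmζ : Measurable ζ)
    (hmh : Measurable h) (hξ0 : ∀ x, 0 ≤ ξ x) (hζ0 : ∀ x, 0 ≤ ζ x)
    (hC : ∀ x, ξ x + ζ x ≤ C) : Integrable (cprError ξ ζ h) D :=
  integrable_of_nonneg_of_le (hmξ.cprError hmζ hmh)
    (fun x => cprError_nonneg (hξ0 x) (hζ0 x))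
    (fun x => (cprError_le_add (hξ0 x) (hζ0 x)).trans (hC x))

lemma measureReal_setOf_ne_le {h₁ h₂ : X → ℤ} (hmξ : Measurable ξ) (hmζ : Measurable ζ)
    (hmγ : Measurable γ) (hξ0 : ∀ x, 0 ≤ ξ x) (hζ0 : ∀ x, 0 ≤ ζ x) (hγ0 : ∀ x, 0 ≤ γ x)
    (hsum : ∀ x, ξ x + ζ x + γ x = 1)
    (hh₁ : ∀ x, h₁ x = -1 ∨ h₁ x = 1) (hh₂ : ∀ x, h₂ x = -1 ∨ h₂ x = 1)
    (hmh₁ : Measurable h₁) (hmh₂ : Measurable h₂) :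
    D.real {x | h₁ x ≠ h₂ x} ≤
      (∫ x, cprError ξ ζ h₁ x ∂D) + (∫ x, cprError ξ ζ h₂ x ∂D) + ∫ x, γ x ∂D := by
  have hS : MeasurableSet {x | h₁ x ≠ h₂ x} := (measurableSet_eq_fun hmh₁ hmh₂).compl
  have hξζ : ∀ x, ξ x + ζ x ≤ 1 := fun x => by linarith [hsum x, hγ0 x]
  have hint₁ : Integrable (cprError ξ ζ h₁) D := integrable_cprError hmξ hmζ hmh₁ hξ0 hζ0 hξζ
  have hint₂ : Integrable (cprError ξ ζ h₂) D := integrable_cprError hmξ hmζ hmh₂ hξ0 hζ0 hξζ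
  have hintγ : Integrable γ D :=
    integrable_of_nonneg_of_le (C := 1) hmγ hγ0 fun x => by linarith [hsum x, hξ0 x, hζ0 x]
  have hpt : ∀ x, {x | h₁ x ≠ h₂ x}.indicator 1 x ≤
      cprError ξ ζ h₁ x + cprError ξ ζ h₂ x + γ x := by
    intro x
    by_cases hne : h₁ x ≠ h₂ x
    · rw [Set.indicator_of_mem hne, cprError_add_of_ne (hh₁ x) (hh₂ x) hne, hsum x]; rfl
    · rw [Set.indicator_of_notMem hne]
      linarith [cprError_nonneg (h := h₁) (hξ0 x) (hζ0 x),
        cprError_nonneg (h := h₂) (hξ0 x) (hζ0 x), hγ0 x]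
  calc D.real {x | h₁ x ≠ h₂ x} = ∫ x, {x | h₁ x ≠ h₂ x}.indicator 1 x ∂D :=
        (integral_indicator_one hS).symm
    _ ≤ ∫ x, cprError ξ ζ h₁ x + cprError ξ ζ h₂ x + γ x ∂D :=
        integral_mono ((integrable_const 1).indicator hS) ((hint₁.add hint₂).add hintγ) hpt
    _ = _ := by
        rw [integral_add (f := fun x => cprError ξ ζ h₁ x + cprError ξ ζ h₂ x) (hint₁.add hint₂)
          hintγ, integral_add hint₁ hint₂]

lemma integral_cprError_add_mul_le {h : X → ℤ} {c : ℝ} (hmξ : Measurable ξ)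
    (hmζ : Measurable ζ) (hmγ : Measurable γ) (hξ0 : ∀ x, 0 ≤ ξ x) (hζ0 : ∀ x, 0 ≤ ζ x)
    (hγ0 : ∀ x, 0 ≤ γ x) (hsum : ∀ x, ξ x + ζ x + γ x = 1) (hmh : Measurable h) (hc : 0 ≤ c) :
    ∫ x, cprError ξ (fun y => ζ y + c * γ y) h x ∂D ≤
      (∫ x, cprError ξ ζ h x ∂D) + c * ∫ x, γ x ∂D := by
  have hξζ : ∀ x, ξ x + ζ x ≤ 1 := fun x => by linarith [hsum x, hγ0 x]
  have hint : Integrable (cprError ξ ζ h) D := integrable_cprError hmξ hmζ hmh hξ0 hζ0 hξζ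
  have hintγ : Integrable γ D :=
    integrable_of_nonneg_of_le (C := 1) hmγ hγ0 fun x => by linarith [hsum x, hξ0 x, hζ0 x]
  have hint' : Integrable (cprError ξ (fun y => ζ y + c * γ y) h) D :=
    integrable_cprError (C := 1 + c) hmξ (hmζ.add (hmγ.const_mul c)) hmh hξ0
      (fun x => add_nonneg (hζ0 x) (mul_nonneg hc (hγ0 x)))
      fun x => by nlinarith [hsum x, hξ0 x, hζ0 x, hγ0 x]
  rw [← integral_const_mul, ← integral_add hint (hintγ.const_mul c)]
  exact integral_mono hint' (hint.add (hintγ.const_mul c)) fun x => cprError_add_mul_le hc (hγ0 x)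

end Integrals

theorem stmt_9_general {X : Type*} [MeasurableSpace X]
    (D : Measure X) [IsProbabilityMeasure D]
    (V : Set (X → ℤ))
    (hV : ∀ h ∈ V, (∀ x, h x = -1 ∨ h x = 1) ∧ Measurable h)
    (η lam : ℝ) (hlam : 0 < lam)
    (ξ ζ γ : X → ℝ)
    (hmξ : Measurable ξ) (hmζ : Measurable ζ) (hmγ : Measurable γ)
    (hξ0 : ∀ x, 0 ≤ ξ x) (hζ0 : ∀ x, 0 ≤ ζ x) (hγ0 : ∀ x, 0 ≤ γ x)
    (hsum : ∀ x, ξ x + ζ x + γ x = 1)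
    (herr : ∀ h ∈ V,
      (∫ x, ξ x * (if h x = -1 then (1 : ℝ) else 0) +
            ζ x * (if h x = 1 then (1 : ℝ) else 0) ∂D) ≤ η - lam)
    (hdis : ∃ h₁ ∈ V, ∃ h₂ ∈ V, 2 * η - lam ≤ (D {x | h₁ x ≠ h₂ x}).toReal)
    (ξ' γ' ζ' : X → ℝ)
    (hξ' : ξ' = ξ)
    (hγ' : γ' = fun x => (1 - lam / (∫ x, γ x ∂D)) * γ x)
    (hζ' : ζ' = fun x => 1 - ξ' x - γ' x) :
    (∀ h ∈ V,
      (∫ x, ξ' x * (if h x = -1 then (1 : ℝ) else 0) +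
            ζ' x * (if h x = 1 then (1 : ℝ) else 0) ∂D) ≤ η) ∧
    (∫ x, γ' x ∂D) = (∫ x, γ x ∂D) - lam := by
  set G := ∫ x, γ x ∂D
  have herr' : ∀ h ∈ V, ∫ x, cprError ξ ζ h x ∂D ≤ η - lam := herr
  have hG : lam ≤ G := by
    obtain ⟨h₁, hV₁, h₂, hV₂, hρ⟩ := hdis
    have := measureReal_setOf_ne_le (D := D) hmξ hmζ hmγ hξ0 hζ0 hγ0 hsum
      (hV h₁ hV₁).1 (hV h₂ hV₂).1 (hV h₁ hV₁).2 (hV h₂ hV₂).2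
    linarith [herr' h₁ hV₁, herr' h₂ hV₂, measureReal_def D {x | h₁ x ≠ h₂ x}]
  have hG0 : G ≠ 0 := (hlam.trans_le hG).ne'
  have hζ'_eq : ζ' = fun x => ζ x + lam / G * γ x := by
    funext x; simp only [hζ', hξ', hγ']; linarith [hsum x]
  refine ⟨fun h hh => ?_, ?_⟩
  · rw [hξ', hζ'_eq]
    have := integral_cprError_add_mul_le (D := D) hmξ hmζ hmγ hξ0 hζ0 hγ0 hsum (hV h hh).2
      (div_nonneg hlam.le (hlam.le.trans hG))
    rw [div_mul_cancel₀ _ hG0] at this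
    exact this.trans (by linarith [herr' h hh])
  · rw [hγ', integral_const_mul, sub_mul, div_mul_cancel₀ _ hG0, one_mul]

theorem stmt_9 {X : Type*} [MeasurableSpace X]
    (D : Measure X) [IsProbabilityMeasure D]
    (V : Set (X → ℤ))
    (hV : ∀ h ∈ V, (∀ x, h x = -1 ∨ h x = 1) ∧ Measurable h)
    (η lam : ℝ) (hlam : 0 < lam) (hlamη : lam < η) (hη : η < 1)
    (ξ ζ γ : X → ℝ)
    (hmξ : Measurable ξ) (hmζ : Measurable ζ) (hmγ : Measurable γ)
    (hξ0 : ∀ x, 0 ≤ ξ x) (hζ0 : ∀ x, 0 ≤ ζ x) (hγ0 : ∀ x, 0 ≤ γ x)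
    (hsum : ∀ x, ξ x + ζ x + γ x = 1)
    (herr : ∀ h ∈ V,
      (∫ x, ξ x * (if h x = -1 then (1 : ℝ) else 0) +
            ζ x * (if h x = 1 then (1 : ℝ) else 0) ∂D) ≤ η - lam)
    (hdis : ∃ h₁ ∈ V, ∃ h₂ ∈ V, 2 * η - lam ≤ (D {x | h₁ x ≠ h₂ x}).toReal)
    (ξ' γ' ζ' : X → ℝ)
    (hξ' : ξ' = ξ)
    (hγ' : γ' = fun x => (1 - lam / (∫ x, γ x ∂D)) * γ x)
    (hζ' : ζ' = fun x => 1 - ξ' x - γ' x) :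
    (∀ h ∈ V,
      (∫ x, ξ' x * (if h x = -1 then (1 : ℝ) else 0) +
            ζ' x * (if h x = 1 then (1 : ℝ) else 0) ∂D) ≤ η) ∧
    (∫ x, γ' x ∂D) = (∫ x, γ x ∂D) - lam :=
  stmt_9_general D V hV η lam hlam ξ ζ γ hmξ hmζ hmγ hξ0 hζ0 hγ0 hsum herr hdis ξ' γ' ζ' hξ' hγ' hζ'
end
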